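/- arXiv:2305.04870 — 3 statements merged into one kernel-verified Lean document; each statement's English description precedes it below -/
import Mathlib

section
/- Let A be a κ×κ real matrix, c ∈ ℝ^κ, S a positive definite matrix with S = Gᵀ·G, G invertible, and let e₁ᵀ denote the first standard basis row vector. Then for every n, the condition (∀ d with dᵀSd ≤ 1, e₁ᵀAⁿ(c + d) ≥ 0) holds if and only if e₁ᵀAⁿc ≥ ‖(e₁ᵀAⁿG⁻¹)ᵀ‖. -/
open Matrix

private lemma cs_aux {κ : ℕ} (x y : Fin κ → ℝ) :
    x ⬝ᵥ y ≤ Real.sqrt (x ⬝ᵥ x) * Real.sqrt (y ⬝ᵥ y) := by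
  have h := real_inner_le_norm ((WithLp.equiv 2 (Fin κ → ℝ)).symm x)
    ((WithLp.equiv 2 (Fin κ → ℝ)).symm y)
  rw [EuclideanSpace.norm_eq, EuclideanSpace.norm_eq] at h
  have e1 : (inner ℝ ((WithLp.equiv 2 (Fin κ → ℝ)).symm x)
      ((WithLp.equiv 2 (Fin κ → ℝ)).symm y) : ℝ) = x ⬝ᵥ y := by
    simp [PiLp.inner_apply, dotProduct, WithLp.equiv_symm_apply, mul_comm]
  have e2 : ∑ i, ‖(WithLp.equiv 2 (Fin κ → ℝ)).symm x i‖ ^ 2 = x ⬝ᵥ x := by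
    simp [WithLp.equiv_symm_apply, dotProduct, sq_abs, sq]
  have e3 : ∑ i, ‖(WithLp.equiv 2 (Fin κ → ℝ)).symm y i‖ ^ 2 = y ⬝ᵥ y := by
    simp [WithLp.equiv_symm_apply, dotProduct, sq_abs, sq]
  rw [e1, e2, e3] at h
  exact h

theorem robust_positivity_step_characterisation (κ : ℕ) [NeZero κ]
    (A S G : Matrix (Fin κ) (Fin κ) ℝ) (c : Fin κ → ℝ)
    (hS : S.PosDef) (hfac : S = Gᵀ * G) (hG : IsUnit G) (n : ℕ) :
    (∀ d : Fin κ → ℝ, d ⬝ᵥ S.mulVec d ≤ 1 → 0 ≤ (A ^ n).mulVec (c + d) 0) ↔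
    Real.sqrt ((vecMul (Pi.single 0 1) ((A ^ n) * G⁻¹)) ⬝ᵥ
        (vecMul (Pi.single 0 1) ((A ^ n) * G⁻¹))) ≤ (A ^ n).mulVec c 0 := by
  have hGdet : IsUnit G.det := (Matrix.isUnit_iff_isUnit_det G).mp hG
  set w : Fin κ → ℝ := vecMul (Pi.single 0 1) (A ^ n) with hw
  set v : Fin κ → ℝ := vecMul (Pi.single 0 1) ((A ^ n) * G⁻¹) with hv
  have hvw : v = vecMul w G⁻¹ := by rw [hw, hv, vecMul_vecMul]
  -- mulVec of A^n at 0 equals dot with w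
  have hdot : ∀ x : Fin κ → ℝ, (A ^ n).mulVec x 0 = w ⬝ᵥ x := by
    intro x
    have h1 : Pi.single (0:Fin κ) (1:ℝ) ⬝ᵥ (A ^ n).mulVec x = (A ^ n).mulVec x 0 := by
      rw [single_dotProduct, one_mul]
    rw [hw, ← h1, dotProduct_mulVec]
  -- quadratic form
  have hquad : ∀ d : Fin κ → ℝ, d ⬝ᵥ S.mulVec d = (G.mulVec d) ⬝ᵥ (G.mulVec d) := by
    intro d
    rw [hfac, ← Matrix.mulVec_mulVec, dotProduct_mulVec, vecMul_transpose]
  -- w ⬝ᵥ d = v ⬝ᵥ (G.mulVec d)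
  have hwd : ∀ d : Fin κ → ℝ, w ⬝ᵥ d = v ⬝ᵥ (G.mulVec d) := by
    intro d
    rw [hw, hv, ← dotProduct_mulVec, ← dotProduct_mulVec, Matrix.mulVec_mulVec,
      Matrix.mul_assoc, Matrix.nonsing_inv_mul G hGdet, Matrix.mul_one]
  have hvv : 0 ≤ v ⬝ᵥ v := by
    simp only [dotProduct]
    exact Finset.sum_nonneg fun i _ => mul_self_nonneg _
  set r : ℝ := Real.sqrt (v ⬝ᵥ v) with hr
  have hr2 : r ^ 2 = v ⬝ᵥ v := Real.sq_sqrt hvv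
  have hrnn : 0 ≤ r := Real.sqrt_nonneg _
  constructor
  · intro h
    rcases eq_or_lt_of_le hrnn with hr0 | hrpos
    · -- r = 0
      have h0 := h 0 (by simp [hquad])
      rw [hdot] at h0
      simpa [← hr0, hdot] using h0
    · -- plug in d = -(1/r) • G⁻¹.mulVec v
      set d : Fin κ → ℝ := (-(1/r)) • (G⁻¹.mulVec v) with hd
      have hGd : G.mulVec d = (-(1/r)) • v := by
        rw [hd, Matrix.mulVec_smul, Matrix.mulVec_mulVec,
          Matrix.mul_nonsing_inv G hGdet, Matrix.one_mulVec]
      have hquadd : d ⬝ᵥ S.mulVec d ≤ 1 := by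
        rw [hquad, hGd, smul_dotProduct, dotProduct_smul, smul_eq_mul, smul_eq_mul,
          ← hr2]
        have hrne : r ≠ 0 := ne_of_gt hrpos
        have : -(1/r) * (-(1/r) * r ^ 2) = 1 := by
          field_simp
        rw [this]
      have h1 := h d hquadd
      rw [hdot, dotProduct_add, hwd d, hGd, dotProduct_smul, ← hr2] at h1
      have hrne : r ≠ 0 := ne_of_gt hrpos
      have : w ⬝ᵥ c + -(1/r) * r ^ 2 = w ⬝ᵥ c - r := by
        field_simp; ring
      rw [smul_eq_mul, this] at h1
      rw [hdot]
      linarith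
  · intro h d hdle
    rw [hdot, dotProduct_add, hwd d]
    rw [hquad] at hdle
    have hcs := cs_aux (-v) (G.mulVec d)
    have hGdnn : 0 ≤ (G.mulVec d) ⬝ᵥ (G.mulVec d) := by
      simp only [dotProduct]
      exact Finset.sum_nonneg fun i _ => mul_self_nonneg _
    have hsle : Real.sqrt ((G.mulVec d) ⬝ᵥ (G.mulVec d)) ≤ 1 := by
      rw [show (1:ℝ) = Real.sqrt 1 by simp]
      exact Real.sqrt_le_sqrt hdle
    have hneg : (-v) ⬝ᵥ (-v) = v ⬝ᵥ v := by simp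
    rw [hneg, ← hr] at hcs
    have hbound : -(v ⬝ᵥ G.mulVec d) ≤ r := by
      calc -(v ⬝ᵥ G.mulVec d) = (-v) ⬝ᵥ (G.mulVec d) := by simp
        _ ≤ r * Real.sqrt ((G.mulVec d) ⬝ᵥ (G.mulVec d)) := hcs
        _ ≤ r * 1 := by exact mul_le_mul_of_nonneg_left hsle hrnn
        _ = r := mul_one r
    rw [hdot] at h
    linarith
end

section
/- Let x be irrational and y ∈ [0,1). For every ε > 0 there exist infinitely many even n ∈ ℕ and infinitely many odd n ∈ ℕ such that the distance from n·x − y to the nearest integer is less than ε. -/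
/-- Distance from `t` to the nearest integer. -/
noncomputable def distInt (t : ℝ) : ℝ := ⨅ m : ℤ, |t - m|

lemma distInt_le (t : ℝ) (m : ℤ) : distInt t ≤ |t - m| :=
  ciInf_le ⟨0, by rintro _ ⟨q, rfl⟩; exact abs_nonneg _⟩ m

/-- An arithmetic progression with small positive step hits every residue window. -/
lemma hit (η β : ℝ) (hη : 0 < η) (N : ℕ) :
    ∃ k : ℕ, N ≤ k ∧ ∃ j : ℤ, |(k : ℝ) * η - β - j| < η := by
  set M : ℤ := ⌈(N : ℝ) * η - β⌉ + 1 with hM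
  have hMle : (N : ℝ) * η ≤ β + M := by
    have h := Int.le_ceil ((N : ℝ) * η - β)
    have : (N : ℝ) * η - β ≤ (M : ℝ) := by push_cast [hM]; linarith
    linarith
  set c : ℝ := (β + M) / η with hc
  have hcN : (N : ℝ) ≤ c := (le_div_iff₀ hη).2 (by linarith)
  have hceil : c ≤ (⌈c⌉ : ℝ) := Int.le_ceil c
  have hceil2 : (⌈c⌉ : ℝ) < c + 1 := Int.ceil_lt_add_one c
  have hN : (N : ℤ) ≤ ⌈c⌉ := by exact_mod_cast hcN.trans hceil
  refine ⟨⌈c⌉.toNat, by omega, M, ?_⟩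
  have hk : ((⌈c⌉.toNat : ℕ) : ℝ) = (⌈c⌉ : ℝ) := by
    norm_cast
    omega
  rw [hk]
  have hcη : c * η = β + M := div_mul_cancel₀ _ hη.ne'
  have h1 : β + M ≤ (⌈c⌉ : ℝ) * η := by nlinarith
  have h2 : (⌈c⌉ : ℝ) * η < β + M + η := by nlinarith
  rw [abs_lt]; constructor <;> linarith

/-- For irrational `α` there is a positive multiple of `α` within `ε` of an integer,
but not equal to it. -/
lemma small_eta (α : ℝ) (hα : Irrational α) (ε : ℝ) (hε : 0 < ε) :
    ∃ (m : ℕ) (p : ℤ) (η : ℝ), 0 < m ∧ (m : ℝ) * α = p + η ∧ η ≠ 0 ∧ |η| < ε := by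
  set S : AddSubgroup ℝ := AddSubgroup.closure {α, 1} with hS
  have hαS : α ∈ S := AddSubgroup.subset_closure (by simp)
  have h1S : (1 : ℝ) ∈ S := AddSubgroup.subset_closure (by simp)
  rcases S.dense_or_cyclic with hdense | ⟨a, ha⟩
  · have hδ : 0 < min ε 1 := lt_min hε one_pos
    obtain ⟨s, hsS, hs⟩ := hdense.exists_mem_open isOpen_Ioo
      (Set.nonempty_Ioo.2 hδ)
    obtain ⟨A, B, hAB⟩ := AddSubgroup.mem_closure_pair.1 hsS
    simp only [zsmul_eq_mul, mul_one] at hAB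
    obtain ⟨hs0, hs1⟩ := hs
    have hslt : s < ε := lt_of_lt_of_le hs1 (min_le_left _ _)
    have hslt1 : s < 1 := lt_of_lt_of_le hs1 (min_le_right _ _)
    have hA : A ≠ 0 := by
      rintro rfl
      push_cast at hAB
      rw [zero_mul, zero_add] at hAB
      have h0 : (0 : ℤ) < B := by exact_mod_cast hAB ▸ hs0
      have h1 : B < 1 := by exact_mod_cast hAB ▸ hslt1
      omega
    rcases hA.lt_or_gt with hAneg | hApos
    · refine ⟨(-A).toNat, B, -s, by omega, ?_, by simpa using hs0.ne', by
        rw [abs_neg, abs_of_pos hs0]; exact hslt⟩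
      have : (((-A).toNat : ℕ) : ℝ) = (-A : ℤ) := by norm_cast; omega
      rw [this]; push_cast; linarith
    · refine ⟨A.toNat, -B, s, by omega, ?_, hs0.ne', by rw [abs_of_pos hs0]; exact hslt⟩
      have : ((A.toNat : ℕ) : ℝ) = (A : ℤ) := by norm_cast; omega
      rw [this]; push_cast; linarith
  · rw [ha] at hαS h1S
    obtain ⟨n, hn⟩ := AddSubgroup.mem_closure_singleton.1 hαS
    obtain ⟨q, hq⟩ := AddSubgroup.mem_closure_singleton.1 h1S
    simp only [zsmul_eq_mul] at hn hq
    have hq0 : (q : ℝ) ≠ 0 := by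
      rintro h; rw [h, zero_mul] at hq; exact one_ne_zero hq.symm
    have : α = ((n / q : ℚ) : ℝ) := by
      have ha' : a = 1 / q := by field_simp at hq ⊢; linarith [hq]
      rw [← hn, ha']; push_cast; field_simp
    exact absurd ⟨(n / q : ℚ), this.symm⟩ hα

lemma key (α β ε : ℝ) (hα : Irrational α) (hε : 0 < ε) :
    {k : ℕ | distInt ((k : ℝ) * α - β) < ε}.Infinite := by
  obtain ⟨m, p, η, hm, hmeq, hη0, hηε⟩ := small_eta α hα ε hε
  apply Set.infinite_of_not_bddAbove
  rintro ⟨N, hN⟩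
  have main : ∃ k : ℕ, N + 1 ≤ k ∧ ∃ j : ℤ, |(k : ℝ) * η - β - j| < |η| := by
    rcases hη0.lt_or_gt with hneg | hpos
    · obtain ⟨k, hk, j, hj⟩ := hit (-η) (-β) (by linarith) (N + 1)
      refine ⟨k, hk, -j, ?_⟩
      have e : (k : ℝ) * (-η) - (-β) - j = -((k : ℝ) * η - β - ((-j : ℤ) : ℝ)) := by
        push_cast; ring
      rw [abs_of_neg hneg, ← abs_neg, ← e]
      exact hj
    · obtain ⟨k, hk, j, hj⟩ := hit η β hpos (N + 1)
      exact ⟨k, hk, j, by rwa [abs_of_pos hpos]⟩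
  obtain ⟨k, hk, j, hj⟩ := main
  have hmem : k * m ∈ {k : ℕ | distInt ((k : ℝ) * α - β) < ε} := by
    have : ((k * m : ℕ) : ℝ) * α - β = ((k * p + j : ℤ) : ℝ) + ((k : ℝ) * η - β - j) := by
      push_cast
      have : (k : ℝ) * ((m : ℝ) * α) = (k : ℝ) * ((p : ℝ) + η) := by rw [hmeq]
      nlinarith [this]
    have hle : distInt (((k * m : ℕ) : ℝ) * α - β) ≤ |(k : ℝ) * η - β - j| := by
      calc distInt (((k * m : ℕ) : ℝ) * α - β)
          ≤ |((k * m : ℕ) : ℝ) * α - β - (k * p + j : ℤ)| := distInt_le _ _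
        _ = |(k : ℝ) * η - β - j| := by rw [this]; congr 1; ring
    exact lt_of_le_of_lt hle (hj.trans hηε)
  have := hN hmem
  have : k ≤ k * m := Nat.le_mul_of_pos_right k hm
  omega

theorem density_with_parity (x y ε : ℝ) (hx : Irrational x)
    (hy : y ∈ Set.Ico (0 : ℝ) 1) (hε : 0 < ε) :
    {n : ℕ | Even n ∧ distInt (n * x - y) < ε}.Infinite ∧
    {n : ℕ | Odd n ∧ distInt (n * x - y) < ε}.Infinite := by
  have h2x : Irrational (2 * x) := by
    have := hx.intCast_mul (m := 2) (by norm_num)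
    simpa using this
  constructor
  · have hk := key (2 * x) y ε h2x hε
    have himg := (hk.image (Set.injOn_of_injective (fun a b h => by simp only at h; omega : Function.Injective (fun k : ℕ => 2 * k))))
    refine himg.mono ?_
    rintro _ ⟨k, hk', rfl⟩
    refine ⟨⟨k, by ring⟩, ?_⟩
    have : ((2 * k : ℕ) : ℝ) * x - y = (k : ℝ) * (2 * x) - y := by push_cast; ring
    rw [this]; exact hk'
  · have hk := key (2 * x) (y - x) ε h2x hε
    have himg := (hk.image (Set.injOn_of_injective (fun a b h => by simp only at h; omega : Function.Injective (fun k : ℕ => 2 * k + 1))))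
    refine himg.mono ?_
    rintro _ ⟨k, hk', rfl⟩
    refine ⟨⟨k, by ring⟩, ?_⟩
    have : ((2 * k + 1 : ℕ) : ℝ) * x - y = (k : ℝ) * (2 * x) - (y - x) := by push_cast; ring
    rw [this]; exact hk'
end

section
/- For every irrational number x, every strictly decreasing positive real function ψ : ℕ → ℝ, and every nondegenerate closed interval [a, b] ⊆ [0, 1], there exists y ∈ [a, b] such that [n·x − y] < ψ(n) for infinitely many n ∈ ℕ. -/
/-- For irrational x and any ε>0 there is a positive natural k and integer j with
`0 < |k x - j| < ε`. -/
lemma exists_small_step (x : ℝ) (hx : Irrational x) {ε : ℝ} (hε : 0 < ε) :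
    ∃ k : ℕ, 0 < k ∧ ∃ j : ℤ, 0 < |(k : ℝ) * x - j| ∧ |(k : ℝ) * x - j| < ε := by
  obtain ⟨n, hn⟩ := exists_nat_gt (1 / ε)
  have hn0 : 0 < n := by
    by_contra h
    push_neg at h
    interval_cases n
    · simp at hn
      linarith [one_div_pos.2 hε]
  obtain ⟨j, k, hk0, hkn, hjk⟩ := Real.exists_int_int_abs_mul_sub_le x hn0
  refine ⟨k.toNat, by omega, j, ?_, ?_⟩
  · rw [abs_pos]
    intro h
    have hirr : Irrational ((k.toNat : ℕ) * x) := hx.natCast_mul (by omega)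
    exact hirr.ne_int j (sub_eq_zero.mp h)
  · have hc : ((k.toNat : ℕ) : ℝ) = (k : ℝ) := by exact_mod_cast Int.toNat_of_nonneg hk0.le
    rw [hc]
    calc |(k : ℝ) * x - j| ≤ 1 / (n + 1) := hjk
      _ < 1 / (1 / ε) := by
        apply one_div_lt_one_div_of_lt (one_div_pos.2 hε)
        linarith
      _ = ε := one_div_one_div ε

/-- The set `{n x - m : n ≥ N, m ∈ ℤ}` is ε-dense near any point. -/
lemma exists_approx (x : ℝ) (hx : Irrational x) (N : ℕ) (y : ℝ) {ε : ℝ} (hε : 0 < ε) :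
    ∃ n : ℕ, N ≤ n ∧ ∃ m : ℤ, |(n : ℝ) * x - m - y| < ε := by
  obtain ⟨k, hk0, j, hδ0, hδε⟩ := exists_small_step x hx hε
  set δ : ℝ := (k : ℝ) * x - j with hδ
  -- choose M with N ≤ (y + M)/δ
  have hδne : δ ≠ 0 := abs_pos.mp hδ0
  obtain ⟨M, hM⟩ : ∃ M : ℤ, (N : ℝ) ≤ (y + M) / δ := by
    rcases lt_or_gt_of_ne hδne with h | h
    · refine ⟨⌊(N : ℝ) * δ - y⌋, ?_⟩
      rw [le_div_iff_of_neg h]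
      have := Int.floor_le ((N : ℝ) * δ - y)
      linarith
    · refine ⟨⌈(N : ℝ) * δ - y⌉, ?_⟩
      rw [le_div_iff₀ h]
      have := Int.le_ceil ((N : ℝ) * δ - y)
      linarith
  set q : ℤ := ⌈(y + M) / δ⌉ with hq
  have hle : (y + M) / δ ≤ (q : ℝ) := Int.le_ceil _
  have hlt : (q : ℝ) < (y + M) / δ + 1 := Int.ceil_lt_add_one _
  have hqN : (N : ℤ) ≤ q := by exact_mod_cast le_trans hM hle
  refine ⟨q.toNat * k, ?_, q * j + M, ?_⟩
  · calc N ≤ q.toNat := by omega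
      _ ≤ q.toNat * k := Nat.le_mul_of_pos_right _ hk0
  · have hqnn : ((q.toNat : ℕ) : ℝ) = (q : ℝ) := by
      exact_mod_cast Int.toNat_of_nonneg (by omega : (0:ℤ) ≤ q)
    have key : ((q.toNat * k : ℕ) : ℝ) * x - ((q * j + M : ℤ) : ℝ) - y
        = (q : ℝ) * δ - (y + (M : ℝ)) := by
      push_cast [hqnn]
      rw [hδ]; ring
    rw [key]
    have h1 : (q : ℝ) * δ - (y + (M : ℝ)) = ((q : ℝ) - (y + M) / δ) * δ := by
      field_simp
    rw [h1, abs_mul]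
    calc |(q : ℝ) - (y + M) / δ| * |δ| < 1 * |δ| := by
          apply mul_lt_mul_of_pos_right _ hδ0
          rw [abs_of_nonneg (by linarith)]
          linarith
      _ = |δ| := one_mul _
      _ < ε := hδε

theorem inhomogeneous_approximation_in_interval (x : ℝ) (hx : Irrational x)
    (ψ : ℕ → ℝ) (hψpos : ∀ n, 0 < ψ n) (hψanti : StrictAnti ψ)
    (a b : ℝ) (hab : a < b) (ha : 0 ≤ a) (hb : b ≤ 1) :
    ∃ y ∈ Set.Icc a b, {n : ℕ | distInt (n * x - y) < ψ n}.Infinite := by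
  set V : ℕ → Set ℝ := fun N =>
    ⋃ (n : ℕ) (_ : N ≤ n) (m : ℤ), Metric.ball ((n : ℝ) * x - m) (ψ n) with hV
  have hVopen : ∀ N, IsOpen (V N) := fun N =>
    isOpen_iUnion fun n => isOpen_iUnion fun _ => isOpen_iUnion fun m => Metric.isOpen_ball
  have hVdense : ∀ N, Dense (V N) := by
    intro N
    rw [Metric.dense_iff]
    intro y ε hε
    obtain ⟨n, hn, m, hnm⟩ := exists_approx x hx N y hε
    refine ⟨(n : ℝ) * x - m, ?_, ?_⟩
    · rw [Metric.mem_ball, Real.dist_eq]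
      exact hnm
    · exact Set.mem_iUnion.2 ⟨n, Set.mem_iUnion.2 ⟨hn, Set.mem_iUnion.2
        ⟨m, Metric.mem_ball_self (hψpos n)⟩⟩⟩
  have hBaire : Dense (⋂ N, V N) := dense_iInter_of_isOpen hVopen hVdense
  obtain ⟨y, hyab, hyV⟩ := hBaire.inter_open_nonempty (Set.Ioo a b) isOpen_Ioo
    (Set.nonempty_Ioo.2 hab)
  refine ⟨y, Set.Ioo_subset_Icc_self hyab, ?_⟩
  apply Set.infinite_of_not_bddAbove
  rintro ⟨B, hB⟩
  have hy : y ∈ V (B + 1) := Set.mem_iInter.mp hyV (B + 1)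
  simp only [hV, Set.mem_iUnion] at hy
  obtain ⟨n, hn, m, hball⟩ := hy
  rw [Metric.mem_ball, Real.dist_eq] at hball
  have hmem : n ∈ {n : ℕ | distInt ((n : ℝ) * x - y) < ψ n} := by
    refine lt_of_le_of_lt (distInt_le _ m) ?_
    rwa [abs_sub_comm, show (n : ℝ) * x - m - y = (n : ℝ) * x - y - m by ring] at hball
  have := hB hmem
  omega
end
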